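/- arXiv:2511.08302 — 3 statements merged into one kernel-verified Lean document; each statement's English description precedes it below -/
import Mathlib

section
/- Let N, M ≥ 2, let h, τ > 0 with τ ≤ h², and let u : {0,…,M} × {0,…,N} → ℝ, f : {0,…,M} × {0,…,N} → ℝ, p : {1,…,M} → ℝ with p^{k+1} > 0 for all k. Suppose the Crank–Nicolson scheme holds: for all 0 ≤ k ≤ M−1 and 1 ≤ i ≤ N−1, (1 + τ/h² + τp^{k+1}) u_i^{k+1} − (τ/(2h²))(u_{i+1}^{k+1} + u_{i−1}^{k+1}) = (1 − τ/h²) u_i^k + (τ/(2h²))(u_{i+1}^k + u_{i−1}^k) + (τ/2)(f_i^{k+1} + f_i^k), together with the Dirichlet boundary conditions u_0^k = u_N^k = 0 for all 0 ≤ k ≤ M. Then for every 0 ≤ k ≤ M−1: max_{0≤i≤N} |u_i^{k+1}| ≤ max_{0≤i≤N} |u_i^k| + τ · max_{0≤i≤N} |(f_i^{k+1} + f_i^k)/2|. -/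
open Finset

/-- Stability of the Crank–Nicolson scheme in the maximum norm:
`‖u^{k+1}‖_∞ ≤ ‖u^k‖_∞ + τ ‖f^{k+1/2}‖_∞`. Here `u k i ≈ u(x_i, t_k)`. -/
theorem crank_nicolson_stability
    (N M : ℕ) (hN : 2 ≤ N) (hM : 2 ≤ M)
    (h τ : ℝ) (hh : 0 < h) (hτ : 0 < τ) (hτh : τ ≤ h ^ 2)
    (u f : ℕ → ℕ → ℝ) (p : ℕ → ℝ)
    (hp : ∀ k < M, 0 < p (k + 1))
    (scheme : ∀ k < M, ∀ i, 1 ≤ i → i ≤ N - 1 →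
      (1 + τ / h ^ 2 + τ * p (k + 1)) * u (k + 1) i -
          (τ / (2 * h ^ 2)) * (u (k + 1) (i + 1) + u (k + 1) (i - 1)) =
        (1 - τ / h ^ 2) * u k i + (τ / (2 * h ^ 2)) * (u k (i + 1) + u k (i - 1)) +
          (τ / 2) * (f (k + 1) i + f k i))
    (hbc : ∀ k ≤ M, u k 0 = 0 ∧ u k N = 0) :
    ∀ k < M,
      Finset.sup' (Finset.range (N + 1)) (Finset.nonempty_range_iff.mpr (Nat.succ_ne_zero N))
          (fun i => |u (k + 1) i|) ≤
        Finset.sup' (Finset.range (N + 1)) (Finset.nonempty_range_iff.mpr (Nat.succ_ne_zero N))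
            (fun i => |u k i|) +
          τ * Finset.sup' (Finset.range (N + 1))
              (Finset.nonempty_range_iff.mpr (Nat.succ_ne_zero N))
              (fun i => |(f (k + 1) i + f k i) / 2|) := by
  intro k hk
  have hne : (Finset.range (N + 1)).Nonempty :=
    Finset.nonempty_range_iff.mpr (Nat.succ_ne_zero N)
  have hmem : ∀ j, j ≤ N → j ∈ Finset.range (N + 1) := fun j hj =>
    Finset.mem_range.mpr (Nat.lt_succ_of_le hj)
  set A := Finset.sup' (Finset.range (N + 1)) (Finset.nonempty_range_iff.mpr (Nat.succ_ne_zero N))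
      (fun i => |u (k + 1) i|) with hAdef
  set B := Finset.sup' (Finset.range (N + 1)) (Finset.nonempty_range_iff.mpr (Nat.succ_ne_zero N))
      (fun i => |u k i|) with hBdef
  set F := Finset.sup' (Finset.range (N + 1)) (Finset.nonempty_range_iff.mpr (Nat.succ_ne_zero N))
      (fun i => |(f (k + 1) i + f k i) / 2|) with hFdef
  have hAle : ∀ j, j ≤ N → |u (k + 1) j| ≤ A := fun j hj =>
    Finset.le_sup' (fun i => |u (k + 1) i|) (hmem j hj)
  have hBle : ∀ j, j ≤ N → |u k j| ≤ B := fun j hj =>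
    Finset.le_sup' (fun i => |u k i|) (hmem j hj)
  have hFle : ∀ j, j ≤ N → |(f (k + 1) j + f k j) / 2| ≤ F := fun j hj =>
    Finset.le_sup' (fun i => |(f (k + 1) i + f k i) / 2|) (hmem j hj)
  have hA0 : 0 ≤ A := le_trans (abs_nonneg _) (hAle 0 (Nat.zero_le N))
  have hB0 : 0 ≤ B := le_trans (abs_nonneg _) (hBle 0 (Nat.zero_le N))
  have hF0 : 0 ≤ F := le_trans (abs_nonneg _) (hFle 0 (Nat.zero_le N))
  obtain ⟨i, hiS, hieq⟩ :=
    Finset.exists_mem_eq_sup' hne (fun i => |u (k + 1) i|)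
  have hi: i ≤ N := Nat.lt_succ_iff.mp (Finset.mem_range.mp hiS)
  have hAeq : A = |u (k + 1) i| := hieq
  -- boundary cases
  by_cases h0 : i = 0
  · have : u (k + 1) i = 0 := by rw [h0]; exact (hbc (k + 1) hk).1
    rw [hAeq, this, abs_zero]
    positivity
  by_cases hiN : i = N
  · have : u (k + 1) i = 0 := by rw [hiN]; exact (hbc (k + 1) hk).2
    rw [hAeq, this, abs_zero]
    positivity
  -- interior
  have h1 : 1 ≤ i := Nat.one_le_iff_ne_zero.mpr h0
  have h2 : i ≤ N - 1 := by omega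
  have hip1 : i + 1 ≤ N := by omega
  have him1 : i - 1 ≤ N := by omega
  have hh2 : (0:ℝ) < h ^ 2 := by positivity
  have ha : (0:ℝ) < τ / h ^ 2 := by positivity
  have ha1 : τ / h ^ 2 ≤ 1 := (div_le_one hh2).mpr hτh
  have hP := hp k hk
  have E := scheme k hk i h1 h2
  have e2 : (1 + τ / h ^ 2 + τ * p (k + 1)) * u (k + 1) i =
      (τ / (2 * h ^ 2)) * (u (k + 1) (i + 1) + u (k + 1) (i - 1)) +
      ((1 - τ / h ^ 2) * u k i + (τ / (2 * h ^ 2)) * (u k (i + 1) + u k (i - 1)) +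
        τ * ((f (k + 1) i + f k i) / 2)) := by
    linear_combination E
  have hcpos : (0:ℝ) ≤ τ / (2 * h ^ 2) := by positivity
  have hcoef : (0:ℝ) < 1 + τ / h ^ 2 + τ * p (k + 1) := by positivity
  have key : (1 + τ / h ^ 2 + τ * p (k + 1)) * A ≤
      (τ / (2 * h ^ 2)) * (A + A) + ((1 - τ / h ^ 2) * B + (τ / (2 * h ^ 2)) * (B + B) + τ * F) := by
    calc (1 + τ / h ^ 2 + τ * p (k + 1)) * A
        = |(1 + τ / h ^ 2 + τ * p (k + 1)) * u (k + 1) i| := by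
          rw [abs_mul, abs_of_pos hcoef, ← hAeq]
      _ = |(τ / (2 * h ^ 2)) * (u (k + 1) (i + 1) + u (k + 1) (i - 1)) +
          ((1 - τ / h ^ 2) * u k i + (τ / (2 * h ^ 2)) * (u k (i + 1) + u k (i - 1)) +
            τ * ((f (k + 1) i + f k i) / 2))| := by rw [e2]
      _ ≤ |(τ / (2 * h ^ 2)) * (u (k + 1) (i + 1) + u (k + 1) (i - 1))| +
          (|(1 - τ / h ^ 2) * u k i| + |(τ / (2 * h ^ 2)) * (u k (i + 1) + u k (i - 1))| +
            |τ * ((f (k + 1) i + f k i) / 2)|) :=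
          (abs_add_le _ _).trans (add_le_add_right
            ((abs_add_le _ _).trans (add_le_add_left (abs_add_le _ _) _)) _)
      _ ≤ (τ / (2 * h ^ 2)) * (A + A) +
          ((1 - τ / h ^ 2) * B + (τ / (2 * h ^ 2)) * (B + B) + τ * F) := by
          gcongr ?_ + (?_ + ?_ + ?_)
          · rw [abs_mul, abs_of_nonneg hcpos]
            gcongr
            calc _ ≤ _ := abs_add_le _ _
              _ ≤ _ := add_le_add (hAle _ hip1) (hAle _ him1)
          · rw [abs_mul, abs_of_nonneg (by linarith : (0:ℝ) ≤ 1 - τ / h ^ 2)]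
            gcongr
            exact hBle i hi
          · rw [abs_mul, abs_of_nonneg hcpos]
            gcongr
            calc _ ≤ _ := abs_add_le _ _
              _ ≤ _ := add_le_add (hBle _ hip1) (hBle _ him1)
          · rw [abs_mul, abs_of_pos hτ]
            gcongr
            exact hFle i hi
  have hPA : 0 ≤ (τ * p (k + 1)) * A := mul_nonneg (mul_pos hτ hP).le hA0
  have hc : τ / (2 * h ^ 2) = τ / h ^ 2 / 2 := by rw [div_div, mul_comm]
  rw [hc] at key
  nlinarith [key, hPA]
end

section
/- Let N, M ≥ 2, let h, τ > 0 with τ ≤ h², and let u : {0,…,M} × {0,…,N} → ℝ and p : {1,…,M} → ℝ with p^{k+1} > 0 for all k satisfy the homogeneous Crank–Nicolson scheme: for all 0 ≤ k ≤ M−1 and 1 ≤ i ≤ N−1, (1 + τ/h² + τp^{k+1}) u_i^{k+1} − (τ/(2h²))(u_{i+1}^{k+1} + u_{i−1}^{k+1}) = (1 − τ/h²) u_i^k + (τ/(2h²))(u_{i+1}^k + u_{i−1}^k), together with u_0^k = u_N^k = 0 for all k. Then the maximum norm is non-increasing in time: max_{0≤i≤N} |u_i^{k+1}| ≤ max_{0≤i≤N}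 |u_i^k| for every 0 ≤ k ≤ M−1. -/
/-!
Let `A = ‖u^{k+1}‖_∞`. Because of the boundary conditions, `A` is either `0` or attained at an
interior node `i`. With `c = τ/(2h²) ≤ 1/2`, all coefficients on the right-hand side of the scheme
at `i` are nonnegative, so taking absolute values gives
`(1 + 2c + τp) A ≤ 2c A + ‖u^k‖_∞`, whence `A ≤ ‖u^k‖_∞`.
-/

open Finset

theorem abs_le_of_crank_nicolson_stencil {c P x y₁ y₂ z w₁ w₂ B : ℝ}
    (hc : 0 ≤ c) (hc1 : 2 * c ≤ 1) (hP : 0 ≤ P)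
    (hy₁ : |y₁| ≤ |x|) (hy₂ : |y₂| ≤ |x|) (hz : |z| ≤ B) (hw₁ : |w₁| ≤ B) (hw₂ : |w₂| ≤ B)
    (heq : (1 + 2 * c + P) * x - c * (y₁ + y₂) = (1 - 2 * c) * z + c * (w₁ + w₂)) :
    |x| ≤ B := by
  have hP_abs : 0 ≤ P * |x| := mul_nonneg hP (abs_nonneg x)
  have key : (1 + 2 * c + P) * |x| ≤ 2 * c * |x| + B :=
    calc (1 + 2 * c + P) * |x|
        = |c * y₁ + c * y₂ + (1 - 2 * c) * z + c * w₁ + c * w₂| := by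
          rw [← abs_of_nonneg (by linarith : 0 ≤ 1 + 2 * c + P), ← abs_mul]
          congr 1; linear_combination heq
      _ ≤ |c * y₁| + |c * y₂| + |(1 - 2 * c) * z| + |c * w₁| + |c * w₂| := by
          iterate 4 refine (abs_add_le _ _).trans (add_le_add_left ?_ _)
          exact le_rfl
      _ = c * |y₁| + c * |y₂| + (1 - 2 * c) * |z| + c * |w₁| + c * |w₂| := by
          simp only [abs_mul, abs_of_nonneg hc, abs_of_nonneg (sub_nonneg.mpr hc1)]
      _ ≤ c * |x| + c * |x| + (1 - 2 * c) * B + c * B + c * B := by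
          gcongr
      _ = 2 * c * |x| + B := by ring
  linarith

theorem sup'_abs_le_of_interior_max {N : ℕ} (hne : (range (N + 1)).Nonempty) {v : ℕ → ℝ}
    {B : ℝ} (hB : 0 ≤ B) (h0 : v 0 = 0) (hN : v N = 0)
    (hint : ∀ i, 1 ≤ i → i ≤ N - 1 → (∀ j ≤ N, |v j| ≤ |v i|) → |v i| ≤ B) :
    (range (N + 1)).sup' hne (fun i => |v i|) ≤ B := by
  obtain ⟨i, hi, hmax⟩ := exists_mem_eq_sup' hne (fun i => |v i|)
  have hiN : i ≤ N := Nat.lt_succ_iff.mp (mem_range.mp hi)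
  rw [hmax]
  rcases Nat.eq_zero_or_pos i with rfl | hi0
  · simpa [h0] using hB
  rcases hiN.eq_or_lt with rfl | hiN'
  · simpa [hN] using hB
  refine hint i hi0 (by omega) fun j hj => ?_
  rw [← hmax]
  exact le_sup' (fun i => |v i|) (mem_range.mpr (Nat.lt_succ_of_le hj))

theorem crank_nicolson_stability_homogeneous_general
    (N M : ℕ)
    (h τ : ℝ) (hh : 0 < h) (hτ : 0 < τ) (hτh : τ ≤ h ^ 2)
    (u : ℕ → ℕ → ℝ) (p : ℕ → ℝ)
    (hp : ∀ k < M, 0 < p (k + 1))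
    (scheme : ∀ k < M, ∀ i, 1 ≤ i → i ≤ N - 1 →
      (1 + τ / h ^ 2 + τ * p (k + 1)) * u (k + 1) i -
          (τ / (2 * h ^ 2)) * (u (k + 1) (i + 1) + u (k + 1) (i - 1)) =
        (1 - τ / h ^ 2) * u k i + (τ / (2 * h ^ 2)) * (u k (i + 1) + u k (i - 1)))
    (hbc : ∀ k ≤ M, u k 0 = 0 ∧ u k N = 0) :
    ∀ k < M,
      Finset.sup' (Finset.range (N + 1)) (Finset.nonempty_range_iff.mpr (Nat.succ_ne_zero N))
          (fun i => |u (k + 1) i|) ≤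
        Finset.sup' (Finset.range (N + 1)) (Finset.nonempty_range_iff.mpr (Nat.succ_ne_zero N))
          (fun i => |u k i|) := by
  intro k hk
  set B := (range (N + 1)).sup' (nonempty_range_iff.mpr (Nat.succ_ne_zero N)) (fun i => |u k i|)
  have hbound : ∀ j ≤ N, |u k j| ≤ B := fun j hj =>
    le_sup' (fun i => |u k i|) (mem_range.mpr (Nat.lt_succ_of_le hj))
  have hB : 0 ≤ B := (abs_nonneg _).trans (hbound 0 (Nat.zero_le N))
  have hratio : τ / h ^ 2 = 2 * (τ / (2 * h ^ 2)) := by ring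
  have hc1 : 2 * (τ / (2 * h ^ 2)) ≤ 1 := by
    rw [← hratio, div_le_one (by positivity)]; exact hτh
  obtain ⟨h0, hN⟩ := hbc (k + 1) hk
  refine sup'_abs_le_of_interior_max _ hB h0 hN fun i hi1 hi2 hmax => ?_
  have hstencil := scheme k hk i hi1 hi2
  rw [hratio] at hstencil
  exact abs_le_of_crank_nicolson_stencil (by positivity) hc1 (mul_pos hτ (hp k hk)).le
    (hmax _ (by omega)) (hmax _ (by omega)) (hbound _ (by omega)) (hbound _ (by omega))
    (hbound _ (by omega)) hstencil

/-- Stability of the homogeneous Crank–Nicolson scheme in the maximum norm: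
the maximum norm is non-increasing in time, `‖u^{k+1}‖_∞ ≤ ‖u^k‖_∞`. -/
theorem crank_nicolson_stability_homogeneous
    (N M : ℕ) (hN : 2 ≤ N) (hM : 2 ≤ M)
    (h τ : ℝ) (hh : 0 < h) (hτ : 0 < τ) (hτh : τ ≤ h ^ 2)
    (u : ℕ → ℕ → ℝ) (p : ℕ → ℝ)
    (hp : ∀ k < M, 0 < p (k + 1))
    (scheme : ∀ k < M, ∀ i, 1 ≤ i → i ≤ N - 1 →
      (1 + τ / h ^ 2 + τ * p (k + 1)) * u (k + 1) i -
          (τ / (2 * h ^ 2)) * (u (k + 1) (i + 1) + u (k + 1) (i - 1)) =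
        (1 - τ / h ^ 2) * u k i + (τ / (2 * h ^ 2)) * (u k (i + 1) + u k (i - 1)))
    (hbc : ∀ k ≤ M, u k 0 = 0 ∧ u k N = 0) :
    ∀ k < M,
      Finset.sup' (Finset.range (N + 1)) (Finset.nonempty_range_iff.mpr (Nat.succ_ne_zero N))
          (fun i => |u (k + 1) i|) ≤
        Finset.sup' (Finset.range (N + 1)) (Finset.nonempty_range_iff.mpr (Nat.succ_ne_zero N))
          (fun i => |u k i|) :=
  crank_nicolson_stability_homogeneous_general N M h τ hh hτ hτh u p hp scheme hbc
end

section
/- Let N, M ≥ 2, h, τ > 0 with τ ≤ h², C_T > 0, and let e : {0,…,M} × {0,…,N} → ℝ, T^{·} : {0,…,M−1} × {0,…,N} → ℝ, p : {1,…,M} → ℝ with p^{k+1} > 0 satisfy the error equation of the Crank–Nicolson scheme: for all 0 ≤ k ≤ M−1 and 1 ≤ i ≤ N−1, (e_i^{k+1} − e_i^k)/τ − (e_{i+1}^{k+1} − 2e_i^{k+1} + e_{i−1}^{k+1} + e_{i+1}^k − 2e_i^k + e_{i−1}^k)/(2h²) + p^{k+1} e_i^{k+1} = T_i^{k+1/2},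 with e_0^k = e_N^k = 0 for all k, zero initial error e_i^0 = 0 for all i, and truncation bound max_{0≤i≤N} |T_i^{k+1/2}| ≤ C_T(τ² + h²) for all k. Then for every 0 ≤ k ≤ M: max_{0≤i≤N} |e_i^k| ≤ C_T · (kτ) · (τ² + h²); in particular, if Mτ ≤ T then max_{0≤i≤N} |e_i^k| ≤ C_T T (τ² + h²) for all k. -/
/-!
At a grid point where `|e^{k+1}|` is maximal, multiplying the scheme by `2h²τ` expresses
`(2h² + 2τ + 2h²τp) e_j^{k+1}` as `τ` times the four neighbouring values, plus
`(2h² - 2τ) e_j^k`, plus `2h²τ T_j`. Since `τ ≤ h²` all weights are nonnegative, so the new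
neighbours cost at most `2τ |e_j^{k+1}|` and the old values at most `2h² ‖e^k‖_∞`; as `p ≥ 0`
this gives the stability estimate `‖e^{k+1}‖_∞ ≤ ‖e^k‖_∞ + τ ‖T^{k+1/2}‖_∞`. Starting from zero
initial error, the truncation bound accumulates linearly in `k`.
-/

open Finset

theorem le_nsmul_of_le_add {α : Type*} [AddCommMonoid α] [PartialOrder α]
    [IsOrderedAddMonoid α] {a : ℕ → α} {c : α} {M : ℕ} (h₀ : a 0 ≤ 0)
    (hstep : ∀ k < M, a (k + 1) ≤ a k + c) : ∀ k ≤ M, a k ≤ k • c := by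
  intro k
  induction k with
  | zero => simpa using h₀
  | succ k ih =>
    intro hk
    rw [succ_nsmul]
    exact (hstep k hk).trans (add_le_add (ih (by omega)) le_rfl)

namespace CrankNicolson

noncomputable def gridMaxNorm (N : ℕ) (u : ℕ → ℝ) : ℝ :=
  (range (N + 1)).sup' (nonempty_range_iff.mpr (Nat.succ_ne_zero N)) fun i => |u i|

section gridMaxNorm

variable {N : ℕ} {u : ℕ → ℝ}

theorem abs_le_gridMaxNorm {i : ℕ} (hi : i ≤ N) : |u i| ≤ gridMaxNorm N u :=
  le_sup' (fun i => |u i|) (mem_range.mpr (Nat.lt_succ_of_le hi))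

theorem gridMaxNorm_nonneg : 0 ≤ gridMaxNorm N u :=
  (abs_nonneg _).trans (abs_le_gridMaxNorm (Nat.zero_le N))

theorem gridMaxNorm_le {c : ℝ} (h : ∀ i ≤ N, |u i| ≤ c) : gridMaxNorm N u ≤ c :=
  sup'_le _ _ fun i hi => h i (Nat.lt_succ_iff.mp (mem_range.mp hi))

theorem exists_abs_eq_gridMaxNorm : ∃ j ≤ N, |u j| = gridMaxNorm N u := by
  obtain ⟨j, hj, hmax⟩ := exists_mem_eq_sup' (nonempty_range_iff.mpr (Nat.succ_ne_zero N))
    fun i => |u i|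
  exact ⟨j, Nat.lt_succ_iff.mp (mem_range.mp hj), hmax.symm⟩

end gridMaxNorm

/-- `u` is the old time level, `v` the new one. -/
noncomputable def residual (h τ p : ℝ) (u v : ℕ → ℝ) (i : ℕ) : ℝ :=
  (v i - u i) / τ -
      (v (i + 1) - 2 * v i + v (i - 1) + u (i + 1) - 2 * u i + u (i - 1)) / (2 * h ^ 2) +
    p * v i

theorem residual_neg (h τ p : ℝ) (u v : ℕ → ℝ) (i : ℕ) :
    residual h τ p (-u) (-v) i = -residual h τ p u v i := by
  simp only [residual, Pi.neg_apply]
  ring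

section maximumPrinciple

variable {h τ p S : ℝ} {u v : ℕ → ℝ} {i : ℕ}

theorem le_add_mul_residual (hτ : 0 < τ) (hτh : τ ≤ h ^ 2) (hp : 0 ≤ p) (hv : 0 ≤ v i)
    (hv_succ : v (i + 1) ≤ v i) (hv_pred : v (i - 1) ≤ v i)
    (hu : u i ≤ S) (hu_succ : u (i + 1) ≤ S) (hu_pred : u (i - 1) ≤ S) :
    v i ≤ S + τ * residual h τ p u v i := by
  have hh : 0 < h ^ 2 := hτ.trans_le hτh
  have hh₀ : h ≠ 0 := by rintro rfl; simp at hh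
  have scheme : (2 * h ^ 2 + 2 * τ + 2 * h ^ 2 * τ * p) * v i =
      τ * (v (i + 1) + v (i - 1) + u (i + 1) + u (i - 1)) + (2 * h ^ 2 - 2 * τ) * u i +
        2 * h ^ 2 * τ * residual h τ p u v i := by
    simp only [residual]
    field_simp
    ring
  have old : (2 * h ^ 2 - 2 * τ) * u i ≤ (2 * h ^ 2 - 2 * τ) * S :=
    mul_le_mul_of_nonneg_left hu (by linarith)
  have damping : 0 ≤ τ * p * v i := by positivity
  suffices 2 * h ^ 2 * v i ≤ 2 * h ^ 2 * (S + τ * residual h τ p u v i) from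
    le_of_mul_le_mul_left this (by positivity)
  nlinarith

theorem abs_le_add_mul_abs_residual (hτ : 0 < τ) (hτh : τ ≤ h ^ 2) (hp : 0 ≤ p)
    (hv_succ : |v (i + 1)| ≤ |v i|) (hv_pred : |v (i - 1)| ≤ |v i|)
    (hu : |u i| ≤ S) (hu_succ : |u (i + 1)| ≤ S) (hu_pred : |u (i - 1)| ≤ S) :
    |v i| ≤ S + τ * |residual h τ p u v i| := by
  rcases le_total 0 (v i) with hv | hv
  · rw [abs_of_nonneg hv] at hv_succ hv_pred ⊢
    have := le_add_mul_residual hτ hτh hp hv ((le_abs_self _).trans hv_succ)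
      ((le_abs_self _).trans hv_pred) ((le_abs_self _).trans hu)
      ((le_abs_self _).trans hu_succ) ((le_abs_self _).trans hu_pred)
    nlinarith [le_abs_self (residual h τ p u v i)]
  · rw [abs_of_nonpos hv] at hv_succ hv_pred ⊢
    have := le_add_mul_residual (u := -u) (v := -v) hτ hτh hp (neg_nonneg.mpr hv)
      ((neg_le_abs _).trans hv_succ) ((neg_le_abs _).trans hv_pred) ((neg_le_abs _).trans hu)
      ((neg_le_abs _).trans hu_succ) ((neg_le_abs _).trans hu_pred)
    rw [residual_neg, Pi.neg_apply] at this
    nlinarith [neg_le_abs (residual h τ p u v i)]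

end maximumPrinciple

theorem gridMaxNorm_le_add_mul_gridMaxNorm_residual {N : ℕ} {h τ p : ℝ} {u v f : ℕ → ℝ}
    (hτ : 0 < τ) (hτh : τ ≤ h ^ 2) (hp : 0 ≤ p) (hv : v 0 = 0 ∧ v N = 0)
    (hf : ∀ i, 1 ≤ i → i ≤ N - 1 → residual h τ p u v i = f i) :
    gridMaxNorm N v ≤ gridMaxNorm N u + τ * gridMaxNorm N f := by
  obtain ⟨j, hjN, hj⟩ := exists_abs_eq_gridMaxNorm (N := N) (u := v)
  have bound_nonneg : 0 ≤ gridMaxNorm N u + τ * gridMaxNorm N f := by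
    have := gridMaxNorm_nonneg (N := N) (u := u)
    have := gridMaxNorm_nonneg (N := N) (u := f)
    positivity
  rw [← hj]
  rcases Nat.eq_zero_or_pos j with rfl | hj0
  · simpa [hv.1] using bound_nonneg
  rcases eq_or_lt_of_le hjN with rfl | hjN'
  · simpa [hv.2] using bound_nonneg
  calc |v j| ≤ gridMaxNorm N u + τ * |residual h τ p u v j| :=
        abs_le_add_mul_abs_residual hτ hτh hp
          (hj ▸ abs_le_gridMaxNorm (by omega)) (hj ▸ abs_le_gridMaxNorm (by omega))
          (abs_le_gridMaxNorm hjN) (abs_le_gridMaxNorm (by omega)) (abs_le_gridMaxNorm (by omega))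
    _ ≤ gridMaxNorm N u + τ * gridMaxNorm N f := by
        rw [hf j hj0 (by omega)]
        gcongr
        exact abs_le_gridMaxNorm hjN

end CrankNicolson

open CrankNicolson in
theorem crank_nicolson_convergence_general
    (N M : ℕ)
    (h τ : ℝ) (hτ : 0 < τ) (hτh : τ ≤ h ^ 2)
    (CT : ℝ) (hCT : 0 < CT) (Tf : ℝ)
    (e Tr : ℕ → ℕ → ℝ) (p : ℕ → ℝ)
    (hp : ∀ k < M, 0 < p (k + 1))
    (errEq : ∀ k < M, ∀ i, 1 ≤ i → i ≤ N - 1 →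
      (e (k + 1) i - e k i) / τ -
          (e (k + 1) (i + 1) - 2 * e (k + 1) i + e (k + 1) (i - 1) +
            e k (i + 1) - 2 * e k i + e k (i - 1)) / (2 * h ^ 2) +
          p (k + 1) * e (k + 1) i = Tr k i)
    (hbc : ∀ k ≤ M, e k 0 = 0 ∧ e k N = 0)
    (hinit : ∀ i ≤ N, e 0 i = 0)
    (htrunc : ∀ k < M, ∀ i ≤ N, |Tr k i| ≤ CT * (τ ^ 2 + h ^ 2)) :
    (∀ k ≤ M,
      Finset.sup' (Finset.range (N + 1)) (Finset.nonempty_range_iff.mpr (Nat.succ_ne_zero N))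
          (fun i => |e k i|) ≤ CT * ((k : ℝ) * τ) * (τ ^ 2 + h ^ 2)) ∧
    ((M : ℝ) * τ ≤ Tf →
      ∀ k ≤ M,
        Finset.sup' (Finset.range (N + 1)) (Finset.nonempty_range_iff.mpr (Nat.succ_ne_zero N))
          (fun i => |e k i|) ≤ CT * Tf * (τ ^ 2 + h ^ 2)) := by
  have stability : ∀ k < M,
      gridMaxNorm N (e (k + 1)) ≤ gridMaxNorm N (e k) + τ * (CT * (τ ^ 2 + h ^ 2)) := by
    intro k hk
    calc gridMaxNorm N (e (k + 1)) ≤ gridMaxNorm N (e k) + τ * gridMaxNorm N (Tr k) :=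
          gridMaxNorm_le_add_mul_gridMaxNorm_residual hτ hτh (hp k hk).le (hbc (k + 1) hk)
            (errEq k hk)
      _ ≤ _ := by gcongr; exact gridMaxNorm_le (htrunc k hk)
  have initial : gridMaxNorm N (e 0) ≤ 0 :=
    gridMaxNorm_le fun i hi => by rw [hinit i hi, abs_zero]
  have convergence : ∀ k ≤ M, gridMaxNorm N (e k) ≤ CT * ((k : ℝ) * τ) * (τ ^ 2 + h ^ 2) := by
    intro k hk
    have := le_nsmul_of_le_add (a := fun k => gridMaxNorm N (e k)) initial stability k hk
    rw [nsmul_eq_mul] at this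
    linarith
  refine ⟨convergence, fun hT k hk => (convergence k hk).trans ?_⟩
  have hkT : (k : ℝ) * τ ≤ Tf :=
    (mul_le_mul_of_nonneg_right (by exact_mod_cast hk) hτ.le).trans hT
  gcongr

/-- Convergence of the Crank–Nicolson scheme: if the error `e` satisfies the error equation
with truncation error bounded by `C_T (τ² + h²)`, zero initial error and homogeneous boundary
values, then `‖e^k‖_∞ ≤ C_T (k τ)(τ² + h²)`; in particular `‖e^k‖_∞ ≤ C_T T (τ² + h²)`
whenever `M τ ≤ T`. -/
theorem crank_nicolson_convergence
    (N M : ℕ) (hN : 2 ≤ N) (hM : 2 ≤ M)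
    (h τ : ℝ) (hh : 0 < h) (hτ : 0 < τ) (hτh : τ ≤ h ^ 2)
    (CT : ℝ) (hCT : 0 < CT) (Tf : ℝ)
    (e Tr : ℕ → ℕ → ℝ) (p : ℕ → ℝ)
    (hp : ∀ k < M, 0 < p (k + 1))
    (errEq : ∀ k < M, ∀ i, 1 ≤ i → i ≤ N - 1 →
      (e (k + 1) i - e k i) / τ -
          (e (k + 1) (i + 1) - 2 * e (k + 1) i + e (k + 1) (i - 1) +
            e k (i + 1) - 2 * e k i + e k (i - 1)) / (2 * h ^ 2) +
          p (k + 1) * e (k + 1) i = Tr k i)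
    (hbc : ∀ k ≤ M, e k 0 = 0 ∧ e k N = 0)
    (hinit : ∀ i ≤ N, e 0 i = 0)
    (htrunc : ∀ k < M, ∀ i ≤ N, |Tr k i| ≤ CT * (τ ^ 2 + h ^ 2)) :
    (∀ k ≤ M,
      Finset.sup' (Finset.range (N + 1)) (Finset.nonempty_range_iff.mpr (Nat.succ_ne_zero N))
          (fun i => |e k i|) ≤ CT * ((k : ℝ) * τ) * (τ ^ 2 + h ^ 2)) ∧
    ((M : ℝ) * τ ≤ Tf →
      ∀ k ≤ M,
        Finset.sup' (Finset.range (N + 1)) (Finset.nonempty_range_iff.mpr (Nat.succ_ne_zero N))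
          (fun i => |e k i|) ≤ CT * Tf * (τ ^ 2 + h ^ 2)) :=
  crank_nicolson_convergence_general N M h τ hτ hτh CT hCT Tf e Tr p hp errEq hbc hinit htrunc
end
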